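/- arXiv:2506.11030 — 4 statements merged into one kernel-verified Lean document; each statement's English description precedes it below -/
import Mathlib

section
/- Let A ∈ ℝ^{d_2×d_1}, G ∈ ℝ^{d_1×d_y}, y ∈ ℝ^{d_y} nonzero with A G y ≠ 0 and Gy ≠ 0. With W2 = A(I + s_{W2}(Gy)(Gy)^T), W3 = s_{W3} y (A G y)^T, and error e = (1 − s_3) y for a scalar s_3 ≠ 1, if s_{W2} ≥ 0 and s_{W3} > 0 then ⟨G e, W2^T W3^T e⟩ > 0, i.e., the FTP gradient direction G e for the first hidden layer is within 90° of the BP gradient direction W2^T W3^T e. -/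
/-!
`u = G y` is an eigenvector of `1 + s • vecMulVec u u` with eigenvalue `1 + s ‖u‖²`, and `W3ᵀ e`
is a multiple of `A u`. Hence the inner product collapses to
`sW3 (1 - s3)² ‖y‖² ‖A u‖² (1 + sW2 ‖u‖²)`, a product of positive factors.
-/

open Matrix

namespace Matrix

variable {R m n : Type*} [Fintype m]

theorem dotProduct_self_pos [Ring R] [LinearOrder R] [IsStrictOrderedRing R] {v : m → R}
    (hv : v ≠ 0) : 0 < v ⬝ᵥ v :=
  (Finset.sum_nonneg fun i _ => mul_self_nonneg (v i)).lt_of_ne'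
    (dotProduct_self_eq_zero.not.mpr hv)

section CommRing

variable [CommRing R]

theorem smul_vecMulVec_transpose_mulVec (a : m → R) (b : n → R) (s : R) (x : m → R) :
    (s • vecMulVec a b)ᵀ *ᵥ x = (s * (a ⬝ᵥ x)) • b := by
  rw [transpose_smul, transpose_vecMulVec, smul_mulVec, vecMulVec_mulVec, op_smul_eq_smul,
    smul_smul, dotProduct_comm]

variable [Fintype n] [DecidableEq n]

theorem one_add_smul_vecMulVec_self_mulVec (u : n → R) (s : R) :
    (1 + s • vecMulVec u u) *ᵥ u = (1 + s * (u ⬝ᵥ u)) • u := by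
  rw [add_mulVec, one_mulVec, smul_mulVec, vecMulVec_mulVec, op_smul_eq_smul, smul_smul,
    add_smul, one_smul]

theorem dotProduct_transpose_mulVec_mul_one_add_smul_vecMulVec_self (A : Matrix m n R)
    (u : n → R) (s : R) :
    u ⬝ᵥ (A * (1 + s • vecMulVec u u))ᵀ *ᵥ (A *ᵥ u) =
      (A *ᵥ u ⬝ᵥ A *ᵥ u) * (1 + s * (u ⬝ᵥ u)) := by
  rw [dotProduct_transpose_mulVec, ← mulVec_mulVec, one_add_smul_vecMulVec_self_mulVec,
    mulVec_smul, dotProduct_smul, smul_eq_mul, mul_comm]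

end CommRing

end Matrix

theorem ftp_bp_alignment_general {d1 d2 dy : ℕ}
    (A : Matrix (Fin d2) (Fin d1) ℝ) (G : Matrix (Fin d1) (Fin dy) ℝ)
    (y : Fin dy → ℝ) (hy : y ≠ 0)
    (hAGy : A.mulVec (G.mulVec y) ≠ 0)
    (sW2 sW3 s3 : ℝ) (hsW2 : 0 ≤ sW2) (hsW3 : 0 < sW3) (hs3 : s3 ≠ 1)
    (W2 : Matrix (Fin d2) (Fin d1) ℝ)
    (hW2 : W2 = A * (1 + sW2 • vecMulVec (G.mulVec y) (G.mulVec y)))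
    (W3 : Matrix (Fin dy) (Fin d2) ℝ)
    (hW3 : W3 = sW3 • vecMulVec y (A.mulVec (G.mulVec y)))
    (e : Fin dy → ℝ) (he : e = (1 - s3) • y) :
    0 < G.mulVec e ⬝ᵥ (W2ᵀ * W3ᵀ).mulVec e := by
  set u := G *ᵥ y
  have h_inner : G *ᵥ e ⬝ᵥ (W2ᵀ * W3ᵀ) *ᵥ e =
      sW3 * (1 - s3) ^ 2 * (y ⬝ᵥ y) * ((A *ᵥ u ⬝ᵥ A *ᵥ u) * (1 + sW2 * (u ⬝ᵥ u))) := by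
    rw [hW2, hW3, he, ← mulVec_mulVec, smul_vecMulVec_transpose_mulVec, mulVec_smul,
      mulVec_smul, smul_dotProduct, dotProduct_smul,
      dotProduct_transpose_mulVec_mul_one_add_smul_vecMulVec_self, dotProduct_smul]
    simp only [smul_eq_mul]
    ring
  have hs3' : 1 - s3 ≠ 0 := sub_ne_zero.mpr hs3.symm
  have hyy := dotProduct_self_pos hy
  have hvv := dotProduct_self_pos hAGy
  have huu : 0 ≤ u ⬝ᵥ u := Finset.sum_nonneg fun i _ => mul_self_nonneg (u i)
  rw [h_inner]
  positivity

/-- FTP–BP alignment: `⟨G e, W2ᵀ W3ᵀ e⟩ > 0`. -/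
theorem ftp_bp_alignment {d1 d2 dy : ℕ}
    (A : Matrix (Fin d2) (Fin d1) ℝ) (G : Matrix (Fin d1) (Fin dy) ℝ)
    (y : Fin dy → ℝ) (hy : y ≠ 0)
    (hAGy : A.mulVec (G.mulVec y) ≠ 0) (hGy : G.mulVec y ≠ 0)
    (sW2 sW3 s3 : ℝ) (hsW2 : 0 ≤ sW2) (hsW3 : 0 < sW3) (hs3 : s3 ≠ 1)
    (W2 : Matrix (Fin d2) (Fin d1) ℝ)
    (hW2 : W2 = A * (1 + sW2 • vecMulVec (G.mulVec y) (G.mulVec y)))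
    (W3 : Matrix (Fin dy) (Fin d2) ℝ)
    (hW3 : W3 = sW3 • vecMulVec y (A.mulVec (G.mulVec y)))
    (e : Fin dy → ℝ) (he : e = (1 - s3) • y) :
    0 < G.mulVec e ⬝ᵥ (W2ᵀ * W3ᵀ).mulVec e :=
  ftp_bp_alignment_general A G y hy hAGy sW2 sW3 s3 hsW2 hsW3 hs3 W2 hW2 W3 hW3 e he
end

section
/- Let A ∈ ℝ^{d_2×d_1} with A^T A = I, G ∈ ℝ^{d_1×d_y}, y nonzero with Gy ≠ 0, scalars s_{W2} ≥ 0, s_{W3} > 0, s_3 ≠ 1. Define W2 = A(I + s_{W2}(Gy)(Gy)^T), W3 = s_{W3} y (AGy)^T, e = (1−s_3)y. Then there exists a positive scalar s such that s · G e = (W3 W2)^† e, i.e., the FTP feedback signal for the first hidden layer is a positive multiple of the Gauss–Newton update (W3W2)^† e. -/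
/-!
Because `Aᵀ * A = 1`, the product `W3 * W2` collapses to the rank-one matrix `s' • y (G y)ᵀ`.
The Penrose equations identify the pseudoinverse of a rank-one matrix `a bᵀ` as
`(‖a‖² ‖b‖²)⁻¹ • b aᵀ`, and the pseudoinverse is unique, so every pseudoinverse `P` sends
`e = (1 - s3) • y` to `(s' ‖G y‖²)⁻¹ • (1 - s3) • G y`, which is `(s' ‖G y‖²)⁻¹ • G e`.
-/

open Matrix

/-- `P` is the Moore–Penrose pseudoinverse of `M`. -/
def IsMoorePenrose {m n : Type*} [Fintype m] [Fintype n] [DecidableEq m] [DecidableEq n]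
    (M : Matrix m n ℝ) (P : Matrix n m ℝ) : Prop :=
  M * P * M = M ∧ P * M * P = P ∧ (M * P)ᵀ = M * P ∧ (P * M)ᵀ = P * M

theorem Matrix.dotProduct_self_pos_s7 {n : Type*} [Fintype n] {v : n → ℝ} (hv : v ≠ 0) :
    0 < v ⬝ᵥ v := by
  simpa only [star_trivial] using dotProduct_self_star_pos_iff.2 hv

theorem Matrix.smul_vecMulVec_mul_mul_one_add_smul_vecMulVec {l m n : Type*} [Fintype l]
    [Fintype m] [DecidableEq m] {A : Matrix l m ℝ} (hA : Aᵀ * A = 1) (y : n → ℝ) (u : m → ℝ)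
    (s t : ℝ) :
    (t • vecMulVec y (A *ᵥ u)) * (A * (1 + s • vecMulVec u u)) =
      (t * (1 + s * (u ⬝ᵥ u))) • vecMulVec y u := by
  have hAu : (A *ᵥ u) ᵥ* A = u := by rw [← mulVec_transpose, mulVec_mulVec, hA, one_mulVec]
  rw [Matrix.smul_mul, ← Matrix.mul_assoc, vecMulVec_mul, hAu, Matrix.mul_add, Matrix.mul_one,
    Matrix.mul_smul, vecMulVec_mul_vecMulVec, vecMulVec_smul]
  module

section

variable {m n : Type*} [Fintype m] [Fintype n] [DecidableEq m] [DecidableEq n]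

namespace IsMoorePenrose

variable {M : Matrix m n ℝ} {P Q : Matrix n m ℝ}

theorem unique (hP : IsMoorePenrose M P) (hQ : IsMoorePenrose M Q) : P = Q := by
  obtain ⟨hP₁, hP₂, hP₃, hP₄⟩ := hP
  obtain ⟨hQ₁, hQ₂, hQ₃, hQ₄⟩ := hQ
  have hP_eq : P = P * M * Q :=
    calc P = P * (M * P)ᵀ := by rw [hP₃, ← Matrix.mul_assoc, hP₂]
      _ = P * ((M * P)ᵀ * (M * Q)ᵀ) := by
        conv_lhs => rw [← hQ₁]
        simp only [transpose_mul, Matrix.mul_assoc]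
      _ = P * M * Q := by rw [hP₃, hQ₃]; simp only [← Matrix.mul_assoc, hP₂]
  have hQ_eq : Q = P * M * Q :=
    calc Q = (Q * M)ᵀ * Q := by rw [hQ₄, hQ₂]
      _ = (P * M)ᵀ * (Q * M)ᵀ * Q := by
        conv_lhs => rw [← hP₁]
        simp only [transpose_mul, Matrix.mul_assoc]
      _ = P * M * Q := by rw [hP₄, hQ₄]; simp only [Matrix.mul_assoc, hQ₂]
  exact hP_eq.trans hQ_eq.symm

theorem smul (h : IsMoorePenrose M P) {c : ℝ} (hc : c ≠ 0) :
    IsMoorePenrose (c • M) (c⁻¹ • P) := by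
  obtain ⟨h₁, h₂, h₃, h₄⟩ := h
  refine ⟨?_, ?_, ?_, ?_⟩ <;>
    simp only [Matrix.smul_mul, Matrix.mul_smul, smul_smul, mul_inv_cancel₀ hc,
      inv_mul_cancel₀ hc, one_smul, *]

end IsMoorePenrose

theorem isMoorePenrose_vecMulVec {a : m → ℝ} {b : n → ℝ} (ha : a ≠ 0) (hb : b ≠ 0) :
    IsMoorePenrose (vecMulVec a b) ((a ⬝ᵥ a * (b ⬝ᵥ b))⁻¹ • vecMulVec b a) := by
  have hab : a ⬝ᵥ a * (b ⬝ᵥ b) ≠ 0 :=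
    (mul_pos (dotProduct_self_pos_s7 ha) (dotProduct_self_pos_s7 hb)).ne'
  refine ⟨?_, ?_, ?_, ?_⟩ <;>
    simp only [Matrix.smul_mul, Matrix.mul_smul, vecMulVec_mul_vecMulVec, vecMulVec_smul,
      smul_smul, transpose_smul, transpose_vecMulVec]
  · rw [mul_assoc, mul_comm (b ⬝ᵥ b), inv_mul_cancel₀ hab, one_smul]
  · rw [mul_assoc _ (a ⬝ᵥ a), inv_mul_cancel₀ hab, mul_one]

theorem IsMoorePenrose.mulVec_eq_of_smul_vecMulVec {a : m → ℝ} {b : n → ℝ} {P : Matrix n m ℝ}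
    (ha : a ≠ 0) (hb : b ≠ 0) {c : ℝ} (hc : c ≠ 0) (hP : IsMoorePenrose (c • vecMulVec a b) P) :
    P *ᵥ a = (c * (b ⬝ᵥ b))⁻¹ • b := by
  have ha' := (dotProduct_self_pos_s7 ha).ne'
  rw [hP.unique ((isMoorePenrose_vecMulVec ha hb).smul hc), smul_mulVec, smul_mulVec,
    vecMulVec_mulVec, op_smul_eq_smul, smul_smul, smul_smul]
  congr 1
  field_simp

end

theorem ftp_gauss_newton_general {d1 d2 dy : ℕ}
    (A : Matrix (Fin d2) (Fin d1) ℝ) (hA : Aᵀ * A = 1)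
    (G : Matrix (Fin d1) (Fin dy) ℝ) (y : Fin dy → ℝ)
    (hy : y ≠ 0) (hGy : G.mulVec y ≠ 0)
    (sW2 sW3 s3 : ℝ) (hsW2 : 0 ≤ sW2) (hsW3 : 0 < sW3)
    (W2 : Matrix (Fin d2) (Fin d1) ℝ)
    (hW2 : W2 = A * (1 + sW2 • vecMulVec (G.mulVec y) (G.mulVec y)))
    (W3 : Matrix (Fin dy) (Fin d2) ℝ)
    (hW3 : W3 = sW3 • vecMulVec y (A.mulVec (G.mulVec y)))
    (e : Fin dy → ℝ) (he : e = (1 - s3) • y) :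
    ∃ s : ℝ, 0 < s ∧ ∀ P : Matrix (Fin d1) (Fin dy) ℝ,
      IsMoorePenrose (W3 * W2) P → s • G.mulVec e = P.mulVec e := by
  subst hW2 hW3 he
  have hGy_sq := dotProduct_self_pos_s7 hGy
  have hc : 0 < sW3 * (1 + sW2 * (G *ᵥ y ⬝ᵥ G *ᵥ y)) := by positivity
  refine ⟨(sW3 * (1 + sW2 * (G *ᵥ y ⬝ᵥ G *ᵥ y)) * (G *ᵥ y ⬝ᵥ G *ᵥ y))⁻¹, by positivity,
    fun P hP => ?_⟩
  rw [smul_vecMulVec_mul_mul_one_add_smul_vecMulVec hA] at hP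
  rw [mulVec_smul, mulVec_smul, hP.mulVec_eq_of_smul_vecMulVec hy hGy hc.ne']
  exact smul_comm _ _ _

/-- The FTP feedback `G e` is a positive multiple of the Gauss–Newton update `(W3 W2)† e`. -/
theorem ftp_gauss_newton {d1 d2 dy : ℕ}
    (A : Matrix (Fin d2) (Fin d1) ℝ) (hA : Aᵀ * A = 1)
    (G : Matrix (Fin d1) (Fin dy) ℝ) (y : Fin dy → ℝ)
    (hy : y ≠ 0) (hGy : G.mulVec y ≠ 0)
    (sW2 sW3 s3 : ℝ) (hsW2 : 0 ≤ sW2) (hsW3 : 0 < sW3) (hs3 : s3 ≠ 1)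
    (W2 : Matrix (Fin d2) (Fin d1) ℝ)
    (hW2 : W2 = A * (1 + sW2 • vecMulVec (G.mulVec y) (G.mulVec y)))
    (W3 : Matrix (Fin dy) (Fin d2) ℝ)
    (hW3 : W3 = sW3 • vecMulVec y (A.mulVec (G.mulVec y)))
    (e : Fin dy → ℝ) (he : e = (1 - s3) • y) :
    ∃ s : ℝ, 0 < s ∧ ∀ P : Matrix (Fin d1) (Fin dy) ℝ,
      IsMoorePenrose (W3 * W2) P → s • G.mulVec e = P.mulVec e :=
  ftp_gauss_newton_general A hA G y hy hGy sW2 sW3 s3 hsW2 hsW3 W2 hW2 W3 hW3 e he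
end

section
/- Consider the linear two-hidden-layer network with fixed input x and label y, feedback matrix G, and FTP training dynamics: W1^{(0)} = 0, W3^{(0)} = 0, W2^{(0)} = A, with updates W1^{(t+1)} = W1^{(t)} + η1 G e^{(t)} x^T, W2^{(t+1)} = W2^{(t)} + η2 W2^{(t)} G e^{(t)} (h1^{(t)})^T, W3^{(t+1)} = W3^{(t)} + η3 e^{(t)} (h2^{(t)})^T, where h1^{(t)} = W1^{(t)} x, h2^{(t)} = W2^{(t)} h1^{(t)} (using W2 in the 'target' form), h3^{(t)} = W3^{(t)} h2^{(t)}, and e^{(t)} = y − h3^{(t)}. Then for every t ≥ 0 there exist scalars s_1^{(t)}, s_{W1}^{(t)}, s_{W2}^{(t)}, s_{W3}^{(t)} such that h1^{(t)} = s_1^{(t)} G y, W1^{(t)} = s_{W1}^{(t)} (G y) x^T, W2^{(t)} = A(I + s_{W2}^{(t)} (Gy)(Gy)^T), and W3^{(t)} = s_{W3}^{(t)} y (A G y)^T. -/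
/-!
The error `e = y - h₃` is always a multiple of `y`, because `W₃` has rank one with column
space spanned by `y`. Hence every feedback signal `G e` is a multiple of `g = G y`, and each
update adds to `W₁, W₂, W₃` a rank-one term built from `g`, `x`, `y`, `A g` and the current
activations, which by induction are themselves multiples of `g` and `A g`. So the three
weight matrices stay on the one-parameter families of the invariant.
-/

open Matrix

variable {R : Type*} [CommRing R] {m n p q : Type*}

namespace Matrix

theorem smul_vecMulVec_mulVec [Fintype n] (a : R) (u : m → R) (v w : n → R) :
    (a • vecMulVec u v) *ᵥ w = (a * (v ⬝ᵥ w)) • u := by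
  rw [smul_mulVec, vecMulVec_mulVec, op_smul_eq_smul, smul_smul]

variable [Fintype n] [DecidableEq n]

theorem mul_one_add_smul_vecMulVec_mulVec (A : Matrix p n R) (b : R) (g : n → R) :
    (A * (1 + b • vecMulVec g g)) *ᵥ g = (1 + b * (g ⬝ᵥ g)) • (A *ᵥ g) := by
  rw [← mulVec_mulVec, add_mulVec, one_mulVec, smul_vecMulVec_mulVec, mulVec_add,
    mulVec_smul, add_smul, one_smul]

theorem mul_one_add_smul_vecMulVec_add (A : Matrix p n R) (b c : R) (g : n → R) :
    A * (1 + b • vecMulVec g g) + c • vecMulVec (A *ᵥ g) g =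
      A * (1 + (b + c) • vecMulVec g g) := by
  rw [← mul_vecMulVec, ← Matrix.mul_smul, ← Matrix.mul_add, add_assoc, ← add_smul]

end Matrix

/-- The invariant of Lemma 1: `W₁ = a g xᵀ`, `W₂ = A (I + b g gᵀ)`, `W₃ = c y (A g)ᵀ`. -/
def FTPAligned [Fintype n] [DecidableEq n] (g : n → R) (x : m → R) (y : q → R) (A : Matrix p n R)
    (W1 : Matrix n m R) (W2 : Matrix p n R) (W3 : Matrix q p R) : Prop :=
  ∃ a b c : R, W1 = a • vecMulVec g x ∧ W2 = A * (1 + b • vecMulVec g g) ∧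
    W3 = c • vecMulVec y (A *ᵥ g)

namespace FTPAligned

variable [Fintype n] [DecidableEq n] {g : n → R} {x : m → R} {y : q → R} {A : Matrix p n R}
  {W1 : Matrix n m R} {W2 : Matrix p n R} {W3 : Matrix q p R}

theorem init (g : n → R) (x : m → R) (y : q → R) (A : Matrix p n R) :
    FTPAligned g x y A 0 A 0 :=
  ⟨0, 0, 0, by simp⟩

theorem exists_sub_mulVec_eq_smul [Fintype p] (h : FTPAligned g x y A W1 W2 W3) (v : p → R) :
    ∃ k : R, y - W3 *ᵥ v = k • y := by
  obtain ⟨-, -, c, -, -, rfl⟩ := h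
  exact ⟨1 - c * (A *ᵥ g ⬝ᵥ v), by rw [smul_vecMulVec_mulVec, sub_smul, one_smul]⟩

/-- Here `k • y` stands for the error `e`, so that `k • g = G e` is the feedback signal. -/
theorem update [Fintype m] [Fintype p] (h : FTPAligned g x y A W1 W2 W3) (k η1 η2 η3 : R) :
    FTPAligned g x y A (W1 + η1 • vecMulVec (k • g) x)
      (W2 + η2 • vecMulVec (W2 *ᵥ (k • g)) (W1 *ᵥ x))
      (W3 + η3 • vecMulVec (k • y) (W2 *ᵥ (W1 *ᵥ x))) := by
  obtain ⟨a, b, c, rfl, rfl, rfl⟩ := h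
  have h1 : (a • vecMulVec g x) *ᵥ x = (a * (x ⬝ᵥ x)) • g := smul_vecMulVec_mulVec ..
  have h2 : (A * (1 + b • vecMulVec g g)) *ᵥ ((a * (x ⬝ᵥ x)) • g) =
      (a * (x ⬝ᵥ x) * (1 + b * (g ⬝ᵥ g))) • (A *ᵥ g) := by
    rw [mulVec_smul, mul_one_add_smul_vecMulVec_mulVec, smul_smul]
  refine ⟨a + η1 * k, b + η2 * (k * (1 + b * (g ⬝ᵥ g))) * (a * (x ⬝ᵥ x)),
    c + η3 * k * (a * (x ⬝ᵥ x) * (1 + b * (g ⬝ᵥ g))), ?_, ?_, ?_⟩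
  · rw [smul_vecMulVec, smul_smul, ← add_smul]
  · rw [h1, mulVec_smul, mul_one_add_smul_vecMulVec_mulVec, smul_smul, smul_vecMulVec,
      vecMulVec_smul, smul_smul, smul_smul, mul_one_add_smul_vecMulVec_add]
  · rw [h1, h2, smul_vecMulVec, vecMulVec_smul, smul_smul, smul_smul, ← add_smul]

end FTPAligned

theorem ftp_invariant_general {dx d1 d2 dy : ℕ}
    (x : Fin dx → ℝ) (y : Fin dy → ℝ)
    (G : Matrix (Fin d1) (Fin dy) ℝ) (A : Matrix (Fin d2) (Fin d1) ℝ)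
    (η1 η2 η3 : ℝ)
    (W1 : ℕ → Matrix (Fin d1) (Fin dx) ℝ)
    (W2 : ℕ → Matrix (Fin d2) (Fin d1) ℝ)
    (W3 : ℕ → Matrix (Fin dy) (Fin d2) ℝ)
    (h1 : ℕ → Fin d1 → ℝ) (h2 : ℕ → Fin d2 → ℝ) (h3 : ℕ → Fin dy → ℝ)
    (e : ℕ → Fin dy → ℝ)
    (hh1 : ∀ t, h1 t = (W1 t).mulVec x)
    (hh2 : ∀ t, h2 t = (W2 t).mulVec (h1 t))
    (hh3 : ∀ t, h3 t = (W3 t).mulVec (h2 t))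
    (hee : ∀ t, e t = y - h3 t)
    (hW10 : W1 0 = 0) (hW20 : W2 0 = A) (hW30 : W3 0 = 0)
    (hU1 : ∀ t, W1 (t + 1) = W1 t + η1 • vecMulVec (G.mulVec (e t)) x)
    (hU2 : ∀ t, W2 (t + 1) =
      W2 t + η2 • vecMulVec ((W2 t).mulVec (G.mulVec (e t))) (h1 t))
    (hU3 : ∀ t, W3 (t + 1) = W3 t + η3 • vecMulVec (e t) (h2 t)) :
    ∀ t, ∃ s1 sW1 sW2 sW3 : ℝ,
      h1 t = s1 • G.mulVec y ∧
      W1 t = sW1 • vecMulVec (G.mulVec y) x ∧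
      W2 t = A * (1 + sW2 • vecMulVec (G.mulVec y) (G.mulVec y)) ∧
      W3 t = sW3 • vecMulVec y (A.mulVec (G.mulVec y)) := by
  have aligned : ∀ t, FTPAligned (G *ᵥ y) x y A (W1 t) (W2 t) (W3 t) := by
    intro t
    induction t with
    | zero => rw [hW10, hW20, hW30]; exact FTPAligned.init ..
    | succ t ih =>
      obtain ⟨k, hk⟩ := ih.exists_sub_mulVec_eq_smul (h2 t)
      have he : e t = k • y := by rw [hee, hh3, hk]
      rw [hU1, hU2, hU3, he, mulVec_smul, hh2, hh1]
      exact ih.update k η1 η2 η3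
  intro t
  obtain ⟨a, b, c, hW1, hW2, hW3⟩ := aligned t
  exact ⟨a * (x ⬝ᵥ x), a, b, c, by rw [hh1, hW1, smul_vecMulVec_mulVec], hW1, hW2, hW3⟩

/-- Lemma 1 invariant of the linear FTP dynamics. -/
theorem ftp_invariant {dx d1 d2 dy : ℕ}
    (x : Fin dx → ℝ) (y : Fin dy → ℝ)
    (G : Matrix (Fin d1) (Fin dy) ℝ) (A : Matrix (Fin d2) (Fin d1) ℝ)
    (η1 η2 η3 : ℝ) (hη1 : 0 < η1) (hη2 : 0 < η2) (hη3 : 0 < η3)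
    (W1 : ℕ → Matrix (Fin d1) (Fin dx) ℝ)
    (W2 : ℕ → Matrix (Fin d2) (Fin d1) ℝ)
    (W3 : ℕ → Matrix (Fin dy) (Fin d2) ℝ)
    (h1 : ℕ → Fin d1 → ℝ) (h2 : ℕ → Fin d2 → ℝ) (h3 : ℕ → Fin dy → ℝ)
    (e : ℕ → Fin dy → ℝ)
    (hh1 : ∀ t, h1 t = (W1 t).mulVec x)
    (hh2 : ∀ t, h2 t = (W2 t).mulVec (h1 t))
    (hh3 : ∀ t, h3 t = (W3 t).mulVec (h2 t))
    (hee : ∀ t, e t = y - h3 t)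
    (hW10 : W1 0 = 0) (hW20 : W2 0 = A) (hW30 : W3 0 = 0)
    (hU1 : ∀ t, W1 (t + 1) = W1 t + η1 • vecMulVec (G.mulVec (e t)) x)
    (hU2 : ∀ t, W2 (t + 1) =
      W2 t + η2 • vecMulVec ((W2 t).mulVec (G.mulVec (e t))) (h1 t))
    (hU3 : ∀ t, W3 (t + 1) = W3 t + η3 • vecMulVec (e t) (h2 t)) :
    ∀ t, ∃ s1 sW1 sW2 sW3 : ℝ,
      h1 t = s1 • G.mulVec y ∧
      W1 t = sW1 • vecMulVec (G.mulVec y) x ∧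
      W2 t = A * (1 + sW2 • vecMulVec (G.mulVec y) (G.mulVec y)) ∧
      W3 t = sW3 • vecMulVec y (A.mulVec (G.mulVec y)) :=
  ftp_invariant_general x y G A η1 η2 η3 W1 W2 W3 h1 h2 h3 e hh1 hh2 hh3 hee hW10 hW20 hW30 hU1 hU2
    hU3
end

section
/- In the setting of Lemma 1's invariant: if h1 = s_1 Gy, W2 = A(I + s_{W2}(Gy)(Gy)^T), and W3 = s_{W3} y (AGy)^T, then the network output h3 = W3 W2 h1 equals s_3 · y with s_3 = s_1 s_{W3}(‖AGy‖^2 + s_{W2}‖AGy‖^2‖Gy‖^2); consequently the error e = y − h3 = (1 − s_3) y is always a scalar multiple of the label y. -/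
open Matrix

variable {R m n : Type*} [CommSemiring R] [Fintype n]

lemma mul_one_add_smul_vecMulVec_mulVec_self [DecidableEq n] (A : Matrix m n R) (g : n → R)
    (s : R) :
    (A * (1 + s • vecMulVec g g)) *ᵥ g = (1 + s * (g ⬝ᵥ g)) • (A *ᵥ g) := by
  rw [← mulVec_mulVec, add_mulVec, one_mulVec, smul_mulVec, vecMulVec_mulVec,
    op_smul_eq_smul, smul_smul, mulVec_add, mulVec_smul, add_smul, one_smul]

lemma smul_vecMulVec_mulVec_smul_self (y : m → R) (a : n → R) (s c : R) :
    (s • vecMulVec y a) *ᵥ (c • a) = (s * c * (a ⬝ᵥ a)) • y := by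
  rw [smul_mulVec, vecMulVec_mulVec, op_smul_eq_smul, dotProduct_smul, smul_eq_mul, smul_smul]
  congr 1
  ring

/-- Under Lemma 1's invariant, the output is `s₃ • y` and the error is `(1 - s₃) • y`. -/
theorem output_multiple_of_label {d1 d2 dy : ℕ}
    (A : Matrix (Fin d2) (Fin d1) ℝ) (G : Matrix (Fin d1) (Fin dy) ℝ)
    (y : Fin dy → ℝ) (s1 sW2 sW3 : ℝ)
    (h1 : Fin d1 → ℝ) (hh1 : h1 = s1 • G.mulVec y)
    (W2 : Matrix (Fin d2) (Fin d1) ℝ)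
    (hW2 : W2 = A * (1 + sW2 • vecMulVec (G.mulVec y) (G.mulVec y)))
    (W3 : Matrix (Fin dy) (Fin d2) ℝ)
    (hW3 : W3 = sW3 • vecMulVec y (A.mulVec (G.mulVec y))) :
    W3.mulVec (W2.mulVec h1) =
        (s1 * sW3 * (A.mulVec (G.mulVec y) ⬝ᵥ A.mulVec (G.mulVec y) +
          sW2 * (A.mulVec (G.mulVec y) ⬝ᵥ A.mulVec (G.mulVec y)) *
            (G.mulVec y ⬝ᵥ G.mulVec y))) • y ∧
      y - W3.mulVec (W2.mulVec h1) =
        (1 - s1 * sW3 * (A.mulVec (G.mulVec y) ⬝ᵥ A.mulVec (G.mulVec y) +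
          sW2 * (A.mulVec (G.mulVec y) ⬝ᵥ A.mulVec (G.mulVec y)) *
            (G.mulVec y ⬝ᵥ G.mulVec y))) • y := by
  have output : W3 *ᵥ (W2 *ᵥ h1) =
      (s1 * sW3 * ((A *ᵥ (G *ᵥ y)) ⬝ᵥ (A *ᵥ (G *ᵥ y)) +
        sW2 * ((A *ᵥ (G *ᵥ y)) ⬝ᵥ (A *ᵥ (G *ᵥ y))) * ((G *ᵥ y) ⬝ᵥ (G *ᵥ y)))) • y := by
    rw [hh1, hW2, hW3, mulVec_smul, mul_one_add_smul_vecMulVec_mulVec_self, smul_smul,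
      smul_vecMulVec_mulVec_smul_self]
    congr 1
    ring
  exact ⟨output, by rw [output, sub_smul, one_smul]⟩
end
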